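/- arXiv:2001.10466 — 3 statements merged into one kernel-verified Lean document; each statement's English description precedes it below -/
import Mathlib

section
/- Scaling limit of Charlier polynomials: for fixed ζ ∈ ℝ, ℓ ∈ ℤ, and ε > 0, lim_{L→∞} π_{L+ℓ}(L + ζ; 1/(Lε²)) / Γ(L + ζ + 1/2) = ε^{ζ−ℓ−1/2} J_{ζ−ℓ−1/2}(2/ε), where J_ν is the Bessel function of the first kind. -/
open Finset Filter

/-- Bessel function of the first kind `J_ν(ζ)`, defined by its power series. -/
noncomputable def besselJ (ν : ℂ) (ζ : ℝ) : ℂ :=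
  ∑' k : ℕ, (-1) ^ k * ((ζ : ℂ) / 2) ^ (ν + 2 * (k : ℂ)) /
    ((k.factorial : ℂ) * Complex.Gamma (ν + (k : ℂ) + 1))

/-- The monic scaled Charlier polynomial
`π_m(x; a) = (−a)^m · ₂F₀(−m, 1/2 − x;; −1/a)`. -/
noncomputable def charlierPoly (m : ℕ) (x a : ℝ) : ℝ :=
  (-a) ^ m * ∑ j ∈ Finset.range (m + 1),
    (ascPochhammer ℝ j).eval (-(m : ℝ)) * (ascPochhammer ℝ j).eval (1 / 2 - x)
      / (j.factorial : ℝ) * (-1 / a) ^ j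

open Topology
open scoped Nat

/-!
Reversing the order of summation in the terminating ₂F₀ and writing `(1/2 - x)_j` as a ratio of
Gamma values gives `π_m(x; a) / Γ(x + 1/2) = ∑_k C(m, k) (-a)^k / Γ(x + 1/2 - m + k)`.
Under the scaling `m = L + ℓ`, `x = L + ζ`, `a = 1/(L ε²)` the Gamma arguments become the fixed
numbers `ν + 1 + k` with `ν = ζ - ℓ - 1/2`, while `C(m, k) a^k → ε^{-2k} / k!`. Since
`|C(m, k) a^k| ≤ (m a)^k / k!` and `m a` stays bounded, Tannery's theorem passes to the limit
termwise, and the limiting series `∑_k (-ε⁻²)^k / (k! Γ(ν + 1 + k))` is `ε^ν J_ν(2/ε)`.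
-/

namespace Real

/-- Valid for every `t`: at the poles both sides vanish, since `Gamma` is `0` at nonpositive
integers. -/
theorem ascPochhammer_eval_div_Gamma_add (t : ℝ) (j : ℕ) :
    (ascPochhammer ℝ j).eval t / Gamma (t + j) = (Gamma t)⁻¹ := by
  induction j with
  | zero => simp
  | succ j ih =>
    rw [ascPochhammer_succ_eval, Nat.cast_succ, ← add_assoc]
    rcases eq_or_ne (t + j) 0 with h | h
    · rw [eq_neg_of_add_eq_zero_left h, Gamma_neg_nat_eq_zero, inv_zero]
      simp
    · rw [Gamma_add_one h, mul_comm (t + j), mul_div_mul_right _ _ h, ih]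

theorem ascPochhammer_eval_one_sub {s : ℝ} (hs : Gamma s ≠ 0) (j : ℕ) :
    (ascPochhammer ℝ j).eval (1 - s) = (-1) ^ j * (Gamma s / Gamma (s - j)) := by
  have h := ascPochhammer_eval_div_Gamma_add (s - j) j
  rw [sub_add_cancel, div_eq_iff hs] at h
  rw [show 1 - s = -(s - 1) by ring, ascPochhammer_eval_neg_eq_descPochhammer,
    descPochhammer_eval_eq_ascPochhammer, sub_right_comm, sub_add_cancel, h, inv_mul_eq_div]

theorem one_le_Gamma {s : ℝ} (hs : 2 ≤ s) : 1 ≤ Gamma s :=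
  Gamma_two ▸ Gamma_strictMonoOn_Ici.monotoneOn (le_refl (2 : ℝ)) hs hs

theorem summable_pow_div_factorial_mul_abs_inv_Gamma (s B : ℝ) :
    Summable fun k : ℕ => B ^ k / k ! * |(Gamma (s + k))⁻¹| := by
  refine Summable.of_norm_bounded_eventually (summable_pow_div_factorial |B|) ?_
  rw [Nat.cofinite_eq_atTop]
  filter_upwards [eventually_ge_atTop ⌈2 - s⌉₊] with k hk
  have hΓ : 1 ≤ Gamma (s + k) :=
    one_le_Gamma (by linarith [Nat.le_ceil (2 - s), (Nat.cast_le (α := ℝ)).2 hk])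
  rw [norm_mul, norm_div, norm_pow, Real.norm_natCast, Real.norm_eq_abs, Real.norm_eq_abs,
    abs_abs, abs_inv, abs_of_pos (zero_lt_one.trans_le hΓ)]
  exact mul_le_of_le_one_right (by positivity) (inv_le_one_of_one_le₀ hΓ)

end Real

open Real

theorem ascPochhammer_eval_neg_natCast {R : Type*} [CommRing R] (m j : ℕ) :
    (ascPochhammer R j).eval (-(m : R)) = (-1) ^ j * (j ! * m.choose j) := by
  rw [ascPochhammer_eval_neg_eq_descPochhammer, descPochhammer_eval_eq_descFactorial,
    Nat.descFactorial_eq_factorial_mul_choose, Nat.cast_mul]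

theorem charlierPoly_div_Gamma (m : ℕ) (x : ℝ) {a : ℝ} (ha : a ≠ 0)
    (hx : Gamma (x + 1 / 2) ≠ 0) :
    charlierPoly m x a / Gamma (x + 1 / 2) =
      ∑' k, m.choose k * (-a) ^ k * (Gamma (x + 1 / 2 - m + k))⁻¹ := by
  rw [tsum_eq_sum (s := range (m + 1)) fun k hk => by
      rw [Nat.choose_eq_zero_of_lt (by simpa using hk), Nat.cast_zero, zero_mul, zero_mul],
    ← sum_range_reflect, charlierPoly, mul_sum, sum_div]
  refine sum_congr rfl fun j hj => ?_
  have hjm : j ≤ m := Nat.lt_succ_iff.mp (mem_range.mp hj)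
  have hpow : (-a) ^ m * (-1 / a) ^ j = (-a) ^ (m - j) := by
    rw [pow_sub₀ _ (neg_ne_zero.mpr ha) hjm, ← inv_pow, inv_neg, neg_div, one_div]
  rw [ascPochhammer_eval_neg_natCast, show 1 / 2 - x = 1 - (x + 1 / 2) by ring,
    ascPochhammer_eval_one_sub hx, Nat.add_sub_cancel, Nat.choose_symm hjm, Nat.cast_sub hjm,
    show x + 1 / 2 - m + (m - j) = x + 1 / 2 - j by ring, ← hpow]
  calc _ = ((-1) ^ j * (-1) ^ j) * (j ! / j !) * (Gamma (x + 1 / 2) / Gamma (x + 1 / 2)) *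
        (m.choose j * ((-a) ^ m * (-1 / a) ^ j) * (Gamma (x + 1 / 2 - j))⁻¹) := by ring
    _ = _ := by
      rw [← mul_pow, neg_one_mul, neg_neg, one_pow, div_self (by positivity), div_self hx]
      ring

theorem Nat.cast_choose_mul_pow_eq_prod {K : Type*} [Field K] [CharZero K] (m k : ℕ) (a : K) :
    (m.choose k : K) * a ^ k = (∏ i ∈ range k, (m * a - i * a)) / k ! := by
  rw [eq_div_iff (Nat.cast_ne_zero.mpr k.factorial_ne_zero)]
  calc (m.choose k : K) * a ^ k * k ! = (descPochhammer K k).eval (m : K) * a ^ k := by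
        rw [descPochhammer_eval_eq_descFactorial, Nat.descFactorial_eq_factorial_mul_choose]
        push_cast; ring
    _ = ∏ i ∈ range k, (m * a - i * a) := by
        rw [descPochhammer_eval_eq_prod_range, ← card_range k, ← prod_const, card_range,
          ← prod_mul_distrib]
        exact prod_congr rfl fun i _ => by ring

theorem tendsto_tsum_choose_mul_pow_mul {α : Type*} {l : Filter α} {m : α → ℕ} {a : α → ℝ}
    {t : ℝ} {c : ℕ → ℝ} (ha : Tendsto a l (𝓝 0)) (hma : Tendsto (fun n => m n * a n) l (𝓝 t))
    (hc : ∀ B, Summable fun k => B ^ k / k ! * |c k|) :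
    Tendsto (fun n => ∑' k, (m n).choose k * a n ^ k * c k) l (𝓝 (∑' k, t ^ k / k ! * c k)) := by
  refine tendsto_tsum_of_dominated_convergence (hc (|t| + 1)) (fun k => ?_) ?_
  · simp_rw [Nat.cast_choose_mul_pow_eq_prod]
    have hprod : Tendsto (fun n => ∏ i ∈ range k, (m n * a n - i * a n)) l (𝓝 (t ^ k)) := by
      simpa using tendsto_finsetProd (range k) fun i _ => hma.sub (ha.const_mul (i : ℝ))
    exact (hprod.div_const _).mul_const _
  · filter_upwards [hma.abs.eventually (gt_mem_nhds (lt_add_one |t|))] with n hn k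
    calc ‖(m n).choose k * a n ^ k * c k‖ = (m n).choose k * |a n| ^ k * |c k| := by
          rw [Real.norm_eq_abs, abs_mul, abs_mul, abs_pow, Nat.abs_cast]
      _ ≤ (m n : ℝ) ^ k / k ! * |a n| ^ k * |c k| := by
          gcongr; exact Nat.choose_le_pow_div k (m n)
      _ = |m n * a n| ^ k / k ! * |c k| := by
          rw [abs_mul, Nat.abs_cast, mul_pow]; ring
      _ ≤ (|t| + 1) ^ k / k ! * |c k| := by gcongr

theorem besselJ_ofReal (ν : ℝ) {x : ℝ} (hx : 0 < x) :
    besselJ ν x =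
      ((x / 2) ^ ν * ∑' k : ℕ, (-(x / 2) ^ 2) ^ k / k ! * (Gamma (ν + 1 + k))⁻¹ : ℝ) := by
  rw [besselJ, Complex.ofReal_mul, Complex.ofReal_tsum, ← tsum_mul_left]
  refine tsum_congr fun k => ?_
  have hpow : ((x : ℂ) / 2) ^ ((ν : ℂ) + 2 * k) = ((x / 2) ^ ν * ((x / 2) ^ 2) ^ k : ℝ) := by
    rw [← pow_mul, ← rpow_natCast, ← rpow_add (by positivity), Complex.ofReal_cpow (by positivity)]
    push_cast; ring_nf
  have hGamma : Complex.Gamma (ν + k + 1) = (Gamma (ν + 1 + k) : ℂ) := by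
    rw [← Complex.Gamma_ofReal]; push_cast; ring_nf
  rw [hpow, hGamma, neg_pow ((x / 2) ^ 2)]
  push_cast
  ring

theorem eventually_natCast_toNat_add (ℓ : ℤ) :
    ∀ᶠ L : ℕ in atTop, ((((L : ℤ) + ℓ).toNat : ℕ) : ℝ) = L + ℓ := by
  filter_upwards [eventually_ge_atTop ℓ.natAbs] with L hL
  rw [← Int.cast_natCast, Int.toNat_of_nonneg (by omega)]
  push_cast; rfl

theorem tendsto_toNat_add_div_self (ℓ : ℤ) :
    Tendsto (fun L : ℕ => ((((L : ℤ) + ℓ).toNat : ℕ) : ℝ) / L) atTop (𝓝 1) := by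
  have h : Tendsto (fun L : ℕ => 1 + (ℓ : ℝ) / L) atTop (𝓝 1) := by
    simpa using tendsto_const_nhds.add (tendsto_const_div_atTop_nhds_zero_nat (ℓ : ℝ))
  refine h.congr' ?_
  filter_upwards [eventually_natCast_toNat_add ℓ, eventually_ge_atTop 1] with L hL hL1
  have : (L : ℝ) ≠ 0 := by positivity
  rw [hL]; field_simp

theorem tendsto_charlierPoly_scaled_div_Gamma (ζ : ℝ) (ℓ : ℤ) {ε : ℝ} (hε : 0 < ε) :
    Tendsto (fun L : ℕ => charlierPoly ((L : ℤ) + ℓ).toNat ((L : ℝ) + ζ) (1 / ((L : ℝ) * ε ^ 2)) /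
        Gamma ((L : ℝ) + ζ + 1 / 2)) atTop
      (𝓝 (∑' k : ℕ, (-(1 / ε) ^ 2) ^ k / k ! * (Gamma (ζ - ℓ - 1 / 2 + 1 + k))⁻¹)) := by
  have ha : Tendsto (fun L : ℕ => -(1 / ((L : ℝ) * ε ^ 2))) atTop (𝓝 0) := by
    simpa using ((tendsto_natCast_atTop_atTop.atTop_mul_const (pow_pos hε 2)).inv_tendsto_atTop).neg
  have hma : Tendsto (fun L : ℕ => ((((L : ℤ) + ℓ).toNat : ℕ) : ℝ) * -(1 / ((L : ℝ) * ε ^ 2)))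
      atTop (𝓝 (-(1 / ε) ^ 2)) := by
    refine ((tendsto_toNat_add_div_self ℓ).mul_const (-(1 / ε) ^ 2)).congr' ?_ |>.trans (by simp)
    filter_upwards [eventually_ge_atTop 1] with L hL
    have : (L : ℝ) ≠ 0 := by positivity
    field_simp
  refine (tendsto_tsum_choose_mul_pow_mul ha hma
    (summable_pow_div_factorial_mul_abs_inv_Gamma _)).congr' ?_
  filter_upwards [eventually_natCast_toNat_add ℓ, eventually_gt_atTop 0,
    eventually_ge_atTop ⌈-ζ⌉₊] with L hm hL hLζ
  have hΓ : Gamma ((L : ℝ) + ζ + 1 / 2) ≠ 0 :=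
    (Gamma_pos_of_pos (by linarith [Nat.le_ceil (-ζ), (Nat.cast_le (α := ℝ)).2 hLζ])).ne'
  rw [charlierPoly_div_Gamma _ _ (by positivity) hΓ, hm]
  congr! 5; ring

/-- Scaling limit of Charlier polynomials:
`lim_{L→∞} π_{L+ℓ}(L + ζ; 1/(Lε²)) / Γ(L + ζ + 1/2) = ε^{ζ−ℓ−1/2} J_{ζ−ℓ−1/2}(2/ε)`. -/
theorem charlier_scaling_limit (ζ : ℝ) (ℓ : ℤ) (ε : ℝ) (hε : 0 < ε) :
    Tendsto
      (fun L : ℕ =>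
        ((charlierPoly ((L : ℤ) + ℓ).toNat ((L : ℝ) + ζ) (1 / ((L : ℝ) * ε ^ 2)) /
          Real.Gamma ((L : ℝ) + ζ + 1 / 2) : ℝ) : ℂ))
      atTop
      (nhds ((Real.rpow ε (ζ - (ℓ : ℝ) - 1 / 2) : ℂ) *
        besselJ ((ζ : ℂ) - (ℓ : ℂ) - 1 / 2) (2 / ε))) := by
  set ν := ζ - (ℓ : ℝ) - 1 / 2 with hν_def
  have hν : (ζ : ℂ) - (ℓ : ℂ) - 1 / 2 = (ν : ℂ) := by rw [hν_def]; push_cast; ring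
  have hJ : ((ε ^ ν : ℝ) : ℂ) * besselJ ν (2 / ε) =
      ((∑' k : ℕ, (-(1 / ε) ^ 2) ^ k / k ! * (Gamma (ν + 1 + k))⁻¹ : ℝ) : ℂ) := by
    rw [besselJ_ofReal ν (by positivity), ← Complex.ofReal_mul, ← mul_assoc,
      show 2 / ε / 2 = ε⁻¹ by field_simp, inv_rpow hε.le, mul_inv_cancel₀ (by positivity),
      one_mul, one_div]
  rw [hν, show Real.rpow ε ν = ε ^ ν from rfl, hJ]
  exact (Complex.continuous_ofReal.tendsto _).comp (tendsto_charlierPoly_scaled_div_Gamma ζ ℓ hε)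
end

section
/- Expectation of products of characteristic polynomials in an orthogonal polynomial ensemble: for the probability measure on ℝ^L proportional to Δ²(x₁,...,x_L) dμ(x₁)···dμ(x_L), the expectation of ∏_{i=1}^N ∏_{j=1}^L (u_i − x_j) equals det(π_{L+k−1}(u_j))_{j,k=1}^N / Δ(u₁,...,u_N), where π_m are the monic orthogonal polynomials for μ. -/
/-!
Multiplying by `Δ(u)`, the integrand becomes `Δ(x) Δ(x, u)`, where `Δ(x, u)` is the Vandermonde
determinant of the `L + N` points `x₁, …, x_L, u₁, …, u_N`. In both Vandermonde determinants the
monomials may be replaced by the monic orthogonal polynomials `π_k`. Andréief's identity then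
integrates out `x`: the result is `L!` times the determinant whose first `L` rows are the inner
products `⟨π_a, π_b⟩` (`b < L + N`) and whose last `N` rows are `π_b(u_i)`. By orthogonality this
matrix is block lower triangular with diagonal upper-left block `diag(h₀, …, h_{L-1})`, so the
integral is `L! h₀ ⋯ h_{L-1} det(π_{L+k}(u_i))`; the case `N = 0` identifies `L! h₀ ⋯ h_{L-1}`
with the normalizing constant `Z_L`.
-/

open MeasureTheory Finset

namespace Matrix

section FromRows

variable {R ι κ : Type*} [CommRing R] [Fintype ι] [DecidableEq ι] [Fintype κ] [DecidableEq κ]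

theorem det_eq_sum_sign_mul_prod (M : Matrix ι ι R) :
    M.det = ∑ σ : Equiv.Perm ι, (Equiv.Perm.sign σ : R) * ∏ i, M i (σ i) := by
  rw [← det_transpose, det_apply']
  rfl

theorem det_fromRows_eq_sum (A : Matrix ι (ι ⊕ κ) R) (B : Matrix κ (ι ⊕ κ) R) :
    (fromRows A B).det = ∑ σ : Equiv.Perm (ι ⊕ κ),
      (Equiv.Perm.sign σ : R) * (∏ j, A j (σ (.inl j))) * ∏ i, B i (σ (.inr i)) := by
  rw [det_eq_sum_sign_mul_prod]
  simp [Fintype.prod_sum_type, fromRows_apply_inl, fromRows_apply_inr, mul_assoc]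

theorem prod_mul_det_fromRows (v : ι → R) (A : Matrix ι (ι ⊕ κ) R) (B : Matrix κ (ι ⊕ κ) R) :
    (∏ j, v j) * (fromRows A B).det = (fromRows (of fun j b => v j * A j b) B).det := by
  have h := det_mul_column (Sum.elim v 1) (fromRows A B)
  simp only [Fintype.prod_sum_type, Sum.elim_inl, Sum.elim_inr, Pi.one_apply, prod_const_one,
    mul_one] at h
  rw [← h]
  congr 1
  ext (j | i) b <;> simp [fromRows_apply_inl, fromRows_apply_inr]

theorem det_fromRows_submatrix (τ : Equiv.Perm ι) (A : Matrix ι (ι ⊕ κ) R)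
    (B : Matrix κ (ι ⊕ κ) R) :
    (fromRows (A.submatrix τ id) B).det = Equiv.Perm.sign τ * (fromRows A B).det := by
  have h := det_permute (Equiv.sumCongr τ 1) (fromRows A B)
  rw [Equiv.Perm.sign_sumCongr, Equiv.Perm.sign_one, mul_one] at h
  rw [← h]
  congr 1
  ext (j | i) b <;> simp [fromRows_apply_inl, fromRows_apply_inr]

end FromRows

variable {R : Type*} [CommRing R]

theorem det_vandermonde_append {m n : ℕ} (v : Fin m → R) (w : Fin n → R) :
    (vandermonde (Fin.append v w)).det =
      (vandermonde v).det * (vandermonde w).det * ∏ i, ∏ j, (w i - v j) := by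
  have castAdd_lt_castAdd (i j : Fin m) : Fin.castAdd n i < Fin.castAdd n j ↔ i < j := Iff.rfl
  have castAdd_lt_natAdd (i : Fin m) (j : Fin n) : Fin.castAdd n i < Fin.natAdd m j := by
    simp only [Fin.lt_def, Fin.val_castAdd, Fin.val_natAdd]; omega
  have natAdd_not_lt_castAdd (i : Fin m) (j : Fin n) : ¬ Fin.natAdd m j < Fin.castAdd n i := by
    simp only [Fin.lt_def, Fin.val_castAdd, Fin.val_natAdd]; omega
  simp only [det_vandermonde, ← filter_lt_eq_Ioi, prod_filter, Fin.prod_univ_add,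
    Fin.append_left, Fin.append_right, Fin.natAdd_lt_natAdd_iff, castAdd_lt_castAdd,
    castAdd_lt_natAdd, natAdd_not_lt_castAdd, if_true, if_false, prod_const_one,
    prod_mul_distrib]
  rw [prod_comm (s := univ) (t := univ) (f := fun i j => w j - v i)]
  ring

theorem det_vandermonde_append_eq_det_fromRows {m n : ℕ} (q : ℕ → Polynomial R)
    (hdeg : ∀ k, (q k).natDegree = k) (hmonic : ∀ k, (q k).Monic) (v : Fin m → R)
    (w : Fin n → R) :
    (vandermonde (Fin.append v w)).det =
      (fromRows (of fun j b => (q (finSumFinEquiv b)).eval (v j))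
        (of fun i b => (q (finSumFinEquiv b)).eval (w i))).det := by
  rw [det_eval_matrixOfPolynomials_eq_det_vandermonde _ (fun k => q k) (fun k => hdeg k)
    (fun k => hmonic k), ← det_submatrix_equiv_self finSumFinEquiv]
  congr 1
  ext (j | i) b <;> simp [fromRows_apply_inl, fromRows_apply_inr]

end Matrix

open Matrix

section Andreief

variable {𝕜 α ι κ : Type*} [RCLike 𝕜] [MeasurableSpace α] {μ : Measure α} [SigmaFinite μ]
  [Fintype ι] [DecidableEq ι] [Fintype κ] [DecidableEq κ]

theorem integrable_det_fromRows {F : ι → α → ι ⊕ κ → 𝕜}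
    (hF : ∀ j k, Integrable (fun t => F j t k) μ) (B : Matrix κ (ι ⊕ κ) 𝕜) :
    Integrable (fun x : ι → α => (fromRows (of fun j k => F j (x j) k) B).det)
      (Measure.pi fun _ => μ) := by
  simp only [det_fromRows_eq_sum, of_apply]
  exact integrable_finsetSum _ fun σ _ =>
    ((Integrable.fintype_prod fun j => hF j _).const_mul _).mul_const _

theorem integral_det_fromRows {F : ι → α → ι ⊕ κ → 𝕜}
    (hF : ∀ j k, Integrable (fun t => F j t k) μ) (B : Matrix κ (ι ⊕ κ) 𝕜) :
    ∫ x : ι → α, (fromRows (of fun j k => F j (x j) k) B).det ∂(Measure.pi fun _ => μ) =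
      (fromRows (of fun j k => ∫ t, F j t k ∂μ) B).det := by
  simp only [det_fromRows_eq_sum, of_apply]
  rw [integral_finsetSum _ fun σ _ =>
    ((Integrable.fintype_prod fun j => hF j _).const_mul _).mul_const _]
  refine sum_congr rfl fun σ _ => ?_
  rw [integral_mul_const, integral_const_mul]
  congr 2
  exact integral_fintype_prod_eq_prod (fun j t => F j t (σ (.inl j)))

/-- A form of Andréief's identity. -/
theorem integral_det_mul_det_fromRows (f : ι → α → 𝕜) (g : ι ⊕ κ → α → 𝕜)
    (hfg : ∀ a b, Integrable (fun t => f a t * g b t) μ) (B : Matrix κ (ι ⊕ κ) 𝕜) :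
    ∫ x : ι → α, (of fun j a => f a (x j)).det * (fromRows (of fun j b => g b (x j)) B).det
        ∂(Measure.pi fun _ => μ) =
      (Fintype.card ι).factorial * (fromRows (of fun a b => ∫ t, f a t * g b t ∂μ) B).det := by
  have expand (x : ι → α) :
      (of fun j a => f a (x j)).det * (fromRows (of fun j b => g b (x j)) B).det =
        ∑ τ : Equiv.Perm ι, (Equiv.Perm.sign τ : 𝕜) *
          (fromRows (of fun j b => f (τ j) (x j) * g b (x j)) B).det := by
    simp only [det_eq_sum_sign_mul_prod (of fun j a => f a (x j)), of_apply, sum_mul,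
      mul_assoc, prod_mul_det_fromRows]
  have term (τ : Equiv.Perm ι) :
      ∫ x : ι → α, (Equiv.Perm.sign τ : 𝕜) *
          (fromRows (of fun j b => f (τ j) (x j) * g b (x j)) B).det ∂(Measure.pi fun _ => μ) =
        (fromRows (of fun a b => ∫ t, f a t * g b t ∂μ) B).det := by
    rw [integral_const_mul, integral_det_fromRows (fun j b => hfg (τ j) b) B]
    rw [show (of fun j b => ∫ t, f (τ j) t * g b t ∂μ) =
        (of fun a b => ∫ t, f a t * g b t ∂μ).submatrix τ id from rfl, det_fromRows_submatrix,
      ← mul_assoc, ← Int.cast_mul, ← Units.val_mul, Int.units_mul_self, Units.val_one,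
      Int.cast_one, one_mul]
  simp_rw [expand]
  rw [integral_finsetSum _ fun τ _ =>
    (integrable_det_fromRows (fun j b => hfg (τ j) b) B).const_mul _]
  simp [term, Fintype.card_perm]

end Andreief

open Polynomial

theorem Polynomial.integrable_eval_of_integrable_pow {μ : Measure ℝ}
    (hmom : ∀ k : ℕ, Integrable (fun x : ℝ => x ^ k) μ) (P : ℝ[X]) :
    Integrable (fun x : ℝ => P.eval x) μ := by
  simp_rw [eval_eq_sum_range]
  exact integrable_finsetSum _ fun n _ => (hmom n).const_mul _

section OrthogonalPolynomials

variable {μ : Measure ℝ} {p : ℕ → ℝ[X]}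

theorem of_integral_eval_mul_eval_eq_fromCols {L N : ℕ}
    (horth : ∀ m m', m ≠ m' → ∫ x : ℝ, (p m).eval x * (p m').eval x ∂μ = 0) :
    (of fun (a : Fin L) (b : Fin L ⊕ Fin N) =>
        ∫ t, (((p a).eval t : ℝ) : ℂ) * (((p (finSumFinEquiv b)).eval t : ℝ) : ℂ) ∂μ) =
      fromCols (diagonal fun j : Fin L => ((∫ t, (p j).eval t * (p j).eval t ∂μ : ℝ) : ℂ)) 0 := by
  have entry (m m' : ℕ) : ∫ t, (((p m).eval t : ℝ) : ℂ) * (((p m').eval t : ℝ) : ℂ) ∂μ =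
      if m = m' then ((∫ t, (p m).eval t * (p m).eval t ∂μ : ℝ) : ℂ) else 0 := by
    simp_rw [← Complex.ofReal_mul]
    rw [integral_complex_ofReal]
    split_ifs with h
    · rw [h]
    · rw [horth m m' h, Complex.ofReal_zero]
  ext a (j | k)
  · simp [entry, fromCols_apply_inl, diagonal_apply, Fin.val_inj]
  · have : (a : ℕ) ≠ L + k := by omega
    simp [entry, fromCols_apply_inr, this]

variable [SigmaFinite μ]

theorem det_vandermonde_mul_integral_prod_sub_mul_sq {L N : ℕ}
    (hmom : ∀ k : ℕ, Integrable (fun x : ℝ => x ^ k) μ)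
    (hmonic : ∀ m, (p m).Monic) (hdeg : ∀ m, (p m).natDegree = m)
    (horth : ∀ m m', m ≠ m' → ∫ x : ℝ, (p m).eval x * (p m').eval x ∂μ = 0) (u : Fin N → ℂ) :
    (vandermonde u).det * ∫ x : Fin L → ℝ, (∏ i, ∏ j, (u i - (x j : ℂ))) *
        ((vandermonde x).det : ℂ) ^ 2 ∂(Measure.pi fun _ => μ) =
      (L.factorial : ℂ) * (∏ j : Fin L, ((∫ t, (p j).eval t * (p j).eval t ∂μ : ℝ) : ℂ)) *
        (of fun i k : Fin N => aeval (u i) (p (L + k))).det := by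
  set B : Matrix (Fin N) (Fin L ⊕ Fin N) ℂ := of fun i b => aeval (u i) (p (finSumFinEquiv b))
  have split (x : Fin L → ℝ) : (vandermonde u).det * ((∏ i, ∏ j, (u i - (x j : ℂ))) *
      ((vandermonde x).det : ℂ) ^ 2) = ((vandermonde x).det : ℂ) *
        (vandermonde (Fin.append (fun j => (x j : ℂ)) u)).det := by
    rw [det_vandermonde_append]
    simp only [det_vandermonde]
    push_cast
    ring
  have real_rows (x : Fin L → ℝ) : ((vandermonde x).det : ℂ) =
      (of fun j a : Fin L => (((p a).eval (x j) : ℝ) : ℂ)).det := by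
    rw [det_eval_matrixOfPolynomials_eq_det_vandermonde x (fun a => p a) (fun a => hdeg a)
      (fun a => hmonic a)]
    exact Complex.ofRealHom.map_det _
  have mixed_rows (x : Fin L → ℝ) : (vandermonde (Fin.append (fun j => (x j : ℂ)) u)).det =
      (fromRows (of fun j b => (((p (finSumFinEquiv b)).eval (x j) : ℝ) : ℂ)) B).det := by
    rw [det_vandermonde_append_eq_det_fromRows (fun m => (p m).map (algebraMap ℝ ℂ))
      (fun m => by rw [(hmonic m).natDegree_map, hdeg]) (fun m => (hmonic m).map _)]
    have aeval_ofReal (P : ℝ[X]) (t : ℝ) : aeval (t : ℂ) P = P.eval t :=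
      aeval_algebraMap_apply_eq_algebraMap_eval (A := ℂ) t P
    simp [B, eval_map_algebraMap, aeval_ofReal]
  have hB : B = fromCols B.toCols₁ (of fun i k : Fin N => aeval (u i) (p (L + k))) := by
    ext i (j | k) <;> simp [B, fromCols_apply_inl, fromCols_apply_inr]
  have hfg (a : Fin L) (b : Fin L ⊕ Fin N) : Integrable
      (fun t => (((p a).eval t : ℝ) : ℂ) * (((p (finSumFinEquiv b)).eval t : ℝ) : ℂ)) μ := by
    simpa [eval_mul] using Complex.ofRealCLM.integrable_comp
      (integrable_eval_of_integrable_pow hmom (p a * p (finSumFinEquiv b)))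
  rw [← integral_const_mul]
  simp_rw [split, real_rows, mixed_rows]
  rw [integral_det_mul_det_fromRows (fun (a : Fin L) t => (((p a).eval t : ℝ) : ℂ))
      (fun (b : Fin L ⊕ Fin N) t => (((p (finSumFinEquiv b)).eval t : ℝ) : ℂ)) hfg B,
    of_integral_eval_mul_eval_eq_fromCols horth, hB, fromRows_fromCols_eq_fromBlocks,
    det_fromBlocks_zero₁₂, det_diagonal, Fintype.card_fin]
  ring

end OrthogonalPolynomials

theorem char_poly_expectation_general (L N : ℕ)
    (μ : Measure ℝ) (hmom : ∀ k : ℕ, Integrable (fun x : ℝ => x ^ k) μ)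
    (p : ℕ → Polynomial ℝ)
    (hmonic : ∀ m, (p m).Monic) (hdeg : ∀ m, (p m).natDegree = m)
    (horth : ∀ m m', m ≠ m' → ∫ x : ℝ, (p m).eval x * (p m').eval x ∂μ = 0)
    (u : Fin N → ℂ) (hu : Function.Injective u)
    (hZpos : 0 < ∫ x : Fin L → ℝ,
      (∏ j : Fin L, ∏ k ∈ Finset.Ioi j, (x k - x j)) ^ 2 ∂(Measure.pi fun _ : Fin L => μ)) :
    (∫ x : Fin L → ℝ, (∏ i : Fin N, ∏ j : Fin L, (u i - (x j : ℂ))) *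
        ((∏ j : Fin L, ∏ k ∈ Finset.Ioi j, (x k - x j) : ℝ) : ℂ) ^ 2
        ∂(Measure.pi fun _ : Fin L => μ)) /
      ((∫ x : Fin L → ℝ,
        (∏ j : Fin L, ∏ k ∈ Finset.Ioi j, (x k - x j)) ^ 2
        ∂(Measure.pi fun _ : Fin L => μ) : ℝ) : ℂ) =
    Matrix.det (Matrix.of fun j k : Fin N =>
        Polynomial.aeval (u j) (p (L + (k : ℕ)))) /
      (∏ j : Fin N, ∏ k ∈ Finset.Ioi j, (u k - u j)) := by
  have : IsFiniteMeasure μ := by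
    simpa [integrable_const_iff] using hmom 0
  have hZ := det_vandermonde_mul_integral_prod_sub_mul_sq (L := L) hmom hmonic hdeg horth
    Fin.elim0
  simp only [univ_eq_empty, prod_empty, det_isEmpty, one_mul, mul_one] at hZ
  have hnum := det_vandermonde_mul_integral_prod_sub_mul_sq (L := L) hmom hmonic hdeg horth u
  simp_rw [← det_vandermonde] at hZpos ⊢
  rw [← integral_complex_ofReal, div_eq_div_iff]
  · push_cast
    rw [mul_comm, hnum, hZ]
    ring
  · rw [integral_complex_ofReal]
    exact_mod_cast hZpos.ne'
  · exact det_vandermonde_ne_zero_iff.mpr hu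

/-- Expectation of products of characteristic polynomials in an orthogonal polynomial
ensemble: with respect to the probability measure on `ℝ^L` proportional to
`Δ²(x) dμ(x₁)⋯dμ(x_L)`, the expectation of `∏_{i=1}^N ∏_{j=1}^L (u_i − x_j)` equals
`det(π_{L+k−1}(u_j))_{j,k=1}^N / Δ(u)`, where `π_m` are the monic orthogonal
polynomials of `μ`. -/
theorem char_poly_expectation (L N : ℕ) (hL : 0 < L) (hN : 0 < N)
    (μ : Measure ℝ) (hmom : ∀ k : ℕ, Integrable (fun x : ℝ => x ^ k) μ)
    (p : ℕ → Polynomial ℝ)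
    (hmonic : ∀ m, (p m).Monic) (hdeg : ∀ m, (p m).natDegree = m)
    (horth : ∀ m m', m ≠ m' → ∫ x : ℝ, (p m).eval x * (p m').eval x ∂μ = 0)
    (u : Fin N → ℂ) (hu : Function.Injective u)
    (hZint : Integrable
      (fun x : Fin L → ℝ => (∏ j : Fin L, ∏ k ∈ Finset.Ioi j, (x k - x j)) ^ 2)
      (Measure.pi fun _ : Fin L => μ))
    (hZpos : 0 < ∫ x : Fin L → ℝ,
      (∏ j : Fin L, ∏ k ∈ Finset.Ioi j, (x k - x j)) ^ 2 ∂(Measure.pi fun _ : Fin L => μ))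
    (hint : Integrable
      (fun x : Fin L → ℝ => (∏ i : Fin N, ∏ j : Fin L, (u i - (x j : ℂ))) *
        ((∏ j : Fin L, ∏ k ∈ Finset.Ioi j, (x k - x j) : ℝ) : ℂ) ^ 2)
      (Measure.pi fun _ : Fin L => μ)) :
    (∫ x : Fin L → ℝ, (∏ i : Fin N, ∏ j : Fin L, (u i - (x j : ℂ))) *
        ((∏ j : Fin L, ∏ k ∈ Finset.Ioi j, (x k - x j) : ℝ) : ℂ) ^ 2
        ∂(Measure.pi fun _ : Fin L => μ)) /
      ((∫ x : Fin L → ℝ,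
        (∏ j : Fin L, ∏ k ∈ Finset.Ioi j, (x k - x j)) ^ 2
        ∂(Measure.pi fun _ : Fin L => μ) : ℝ) : ℂ) =
    Matrix.det (Matrix.of fun j k : Fin N =>
        Polynomial.aeval (u j) (p (L + (k : ℕ)))) /
      (∏ j : Fin N, ∏ k ∈ Finset.Ioi j, (u k - u j)) :=
  char_poly_expectation_general L N μ hmom p hmonic hdeg horth u hu hZpos
end

section
/- The symmetrized multi-point expression S_n is regular on the diagonal for n = 2: if R(z) = E₁₁ + Σ_{k≥1} R_k z^{−k} is a formal matrix power series with R(z)² = R(z) (as formal series), then tr(R(z₁)R(z₂))/(z₁−z₂)² − 1/(z₁−z₂)² is a well-defined formal power series in z₁^{−1}, z₂^{−1}, i.e., tr(R(z₁)R(z₂)) − 1 vanishes to second order on the diagonal z₁ = z₂. -/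
/-!
Let `F(u, v) = Σ c n m uⁿ vᵐ` with `c n m = tr (R n * R m) - tr (R n) * tr (R m)`, the series
`tr (R(z₁) R(z₂)) - 1`. Taking traces in the projector identity shows that every antidiagonal
sum of `c` vanishes, i.e. `F(u, u) = 0`, so `F = (u - v) Q` with `Q` given explicitly. As `F` is
symmetric, `Q` is antisymmetric, hence `Q(u, u) = 0` as well and `Q` is divisible by `u - v`.
-/

open Finset MvPowerSeries

namespace BivariateCoeffs

/-- `F(u, u) = 0` for `F = Σ c n m uⁿ vᵐ`. -/
def VanishesOnDiagonal {M : Type*} [AddCommMonoid M] (c : ℕ → ℕ → M) : Prop :=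
  ∀ N, ∑ k ∈ range (N + 1), c k (N - k) = 0

theorem vanishesOnDiagonal_of_antisymm {M : Type*} [AddCommGroup M] [IsAddTorsionFree M]
    (g : ℕ → ℕ → M) (hg : ∀ a b, g b a = -g a b) : VanishesOnDiagonal g := by
  intro N
  rw [← two_nsmul_eq_zero, two_nsmul]
  nth_rw 1 [← sum_range_reflect]
  rw [← sum_add_distrib]
  refine sum_eq_zero fun k hk => ?_
  rw [mem_range] at hk
  rw [show N + 1 - 1 - k = N - k by omega, show N - (N - k) = k by omega, hg, neg_add_cancel]

variable {K : Type*} [CommRing K]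

def ofCoeffs (c : ℕ → ℕ → K) : MvPowerSeries (Fin 2) K := fun d => c (d 0) (d 1)

@[simp]
theorem coeff_ofCoeffs (c : ℕ → ℕ → K) (d : Fin 2 →₀ ℕ) :
    coeff d (ofCoeffs c) = c (d 0) (d 1) :=
  rfl

def shiftFst (g : ℕ → ℕ → K) : ℕ → ℕ → K
  | 0, _ => 0
  | n + 1, m => g n m

def shiftSnd (g : ℕ → ℕ → K) : ℕ → ℕ → K
  | _, 0 => 0
  | n, m + 1 => g n m

theorem X_zero_mul_ofCoeffs (g : ℕ → ℕ → K) : X 0 * ofCoeffs g = ofCoeffs (shiftFst g) := by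
  ext d
  rw [X_def, coeff_monomial_mul, coeff_ofCoeffs]
  rcases h : d 0 with _ | n <;> simp [shiftFst, h]

theorem X_one_mul_ofCoeffs (g : ℕ → ℕ → K) : X 1 * ofCoeffs g = ofCoeffs (shiftSnd g) := by
  ext d
  rw [X_def, coeff_monomial_mul, coeff_ofCoeffs]
  rcases h : d 1 with _ | m <;> simp [shiftSnd, h]

/-- When the antidiagonal sums of `c` vanish, these are the coefficients of
`ofCoeffs c / (X 0 - X 1)`. -/
def quotCoeffs (c : ℕ → ℕ → K) (a b : ℕ) : K :=
  ∑ i ∈ range (b + 1), c (a + 1 + i) (b - i)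

theorem quotCoeffs_succ (c : ℕ → ℕ → K) (a b : ℕ) :
    quotCoeffs c a (b + 1) = c (a + 1) (b + 1) + quotCoeffs c (a + 1) b := by
  rw [quotCoeffs, sum_range_succ', add_comm]
  congr 1
  refine sum_congr rfl fun i _ => ?_
  rw [Nat.add_sub_add_right]
  congr 1
  omega

theorem shiftFst_sub_shiftSnd_quotCoeffs (c : ℕ → ℕ → K) (hdiag : VanishesOnDiagonal c)
    (n m : ℕ) :
    shiftFst (quotCoeffs c) n m - shiftSnd (quotCoeffs c) n m = c n m := by
  rcases n with _ | n <;> rcases m with _ | m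
  · simpa [shiftFst, shiftSnd] using (hdiag 0).symm
  · rw [shiftFst, shiftSnd, zero_sub, neg_eq_iff_add_eq_zero]
    have h := hdiag (m + 1)
    rw [sum_range_succ'] at h
    simpa [quotCoeffs, add_comm] using h
  · simp [shiftFst, shiftSnd, quotCoeffs]
  · simp only [shiftFst, shiftSnd, quotCoeffs_succ, add_sub_cancel_right]

theorem X_sub_X_mul_ofCoeffs_quotCoeffs (c : ℕ → ℕ → K) (hdiag : VanishesOnDiagonal c) :
    (X 0 - X 1) * ofCoeffs (quotCoeffs c) = ofCoeffs c := by
  ext d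
  rw [sub_mul, X_zero_mul_ofCoeffs, X_one_mul_ofCoeffs, map_sub, coeff_ofCoeffs, coeff_ofCoeffs,
    coeff_ofCoeffs, shiftFst_sub_shiftSnd_quotCoeffs c hdiag]

theorem quotCoeffs_swap (c : ℕ → ℕ → K) (hdiag : VanishesOnDiagonal c)
    (hsymm : ∀ n m, c n m = c m n) (a b : ℕ) :
    quotCoeffs c b a = -quotCoeffs c a b := by
  have h := hdiag (a + b + 1)
  rw [show a + b + 1 + 1 = (a + 1) + (b + 1) by ring, sum_range_add, ← sum_range_reflect] at h
  rw [eq_neg_iff_add_eq_zero, ← h, quotCoeffs, quotCoeffs]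
  congr 1
  all_goals refine sum_congr rfl fun i hi => ?_
  · rw [mem_range] at hi
    rw [hsymm]
    congr 1
    omega
  · congr 1
    omega

theorem exists_X_sub_X_sq_mul_eq_ofCoeffs [IsAddTorsionFree K] (c : ℕ → ℕ → K)
    (hdiag : VanishesOnDiagonal c) (hsymm : ∀ n m, c n m = c m n) :
    ∃ G : MvPowerSeries (Fin 2) K, (X 0 - X 1) ^ 2 * G = ofCoeffs c := by
  have hdiag_quot : VanishesOnDiagonal (quotCoeffs c) :=
    vanishesOnDiagonal_of_antisymm _ (quotCoeffs_swap c hdiag hsymm)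
  refine ⟨ofCoeffs (quotCoeffs (quotCoeffs c)), ?_⟩
  rw [sq, mul_assoc, X_sub_X_mul_ofCoeffs_quotCoeffs _ hdiag_quot,
    X_sub_X_mul_ofCoeffs_quotCoeffs c hdiag]

end BivariateCoeffs

open BivariateCoeffs in
theorem S2_diagonal_regularity_general (R : ℕ → Matrix (Fin 2) (Fin 2) ℂ)
    (hproj : ∀ n : ℕ, ∑ k ∈ Finset.range (n + 1), R k * R (n - k) = R n)
    (htr : ∀ n : ℕ, Matrix.trace (R n) = if n = 0 then 1 else 0) :
    ∃ G : MvPowerSeries (Fin 2) ℂ, ∀ d : Fin 2 →₀ ℕ,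
      MvPowerSeries.coeff d
          ((MvPowerSeries.X 0 - MvPowerSeries.X 1) ^ 2 * G) =
        Matrix.trace (R (d 0) * R (d 1)) - if d = 0 then 1 else 0 := by
  set c : ℕ → ℕ → ℂ := fun n m => (R n * R m).trace - (R n).trace * (R m).trace
  have hsymm : ∀ n m, c n m = c m n := fun n m => by
    simp only [c, Matrix.trace_mul_comm (R n), mul_comm (R n).trace]
  have hdiag : VanishesOnDiagonal c := fun N => by
    rw [sum_sub_distrib, ← Matrix.trace_sum, hproj, sum_range_succ']
    simp [htr]
  obtain ⟨G, hG⟩ := exists_X_sub_X_sq_mul_eq_ofCoeffs c hdiag hsymm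
  refine ⟨G, fun d => ?_⟩
  simp [hG, c, htr, Finsupp.ext_iff, Fin.forall_fin_two, ← ite_and, and_comm]

/-- Diagonal regularity of `S₂`: if `R(z) = E₁₁ + Σ_{k≥1} R_k z^{−k}` is a 2×2-matrix
formal series with `R(z)² = R(z)` and `tr R(z) = 1`, then `tr(R(z₁)R(z₂)) − 1` vanishes
to second order on the diagonal: writing `u = z₁⁻¹`, `v = z₂⁻¹`, the formal power series
with coefficients `tr(R_n R_m)` minus `1` is divisible by `(u − v)²` in `ℂ[[u,v]]`. -/
theorem S2_diagonal_regularity (R : ℕ → Matrix (Fin 2) (Fin 2) ℂ)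
    (h0 : R 0 = !![1, 0; 0, 0])
    (hproj : ∀ n : ℕ, ∑ k ∈ Finset.range (n + 1), R k * R (n - k) = R n)
    (htr : ∀ n : ℕ, Matrix.trace (R n) = if n = 0 then 1 else 0) :
    ∃ G : MvPowerSeries (Fin 2) ℂ, ∀ d : Fin 2 →₀ ℕ,
      MvPowerSeries.coeff d
          ((MvPowerSeries.X 0 - MvPowerSeries.X 1) ^ 2 * G) =
        Matrix.trace (R (d 0) * R (d 1)) - if d = 0 then 1 else 0 :=
  S2_diagonal_regularity_general R hproj htr
end
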